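/- Let Ω ⊂ ℝⁿ be a nonempty proper open set, let 0 < c < 1, let 0 < p < ∞ and θ ∈ ℝ. Then there are constants c₁, c₂ > 0 depending only on p, θ, n and c such that every F ∈ L^p_loc(Ω) satisfies c₁·∫_Ω |F|^p δ^θ ≤ ∫_Ω (⨍_{B(x,cδ(x))} |F|^p) · δ(x)^θ dx ≤ c₂·∫_Ω |F|^p δ^θ, where δ(x) = dist(x,∂Ω). -/

import Mathlib

open MeasureTheory Metric Set Filter
open scoped ENNReal NNReal Topology RealInnerProductSpace

noncomputable section

namespace Paper

/-- Euclidean space `ℝⁿ`. -/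
abbrev Euc (n : ℕ) : Type := EuclideanSpace ℝ (Fin n)

variable {n : ℕ}

/-- `δ(x)`: the distance from `x` to the boundary of `Ω`. -/
def bd (Ω : Set (Euc n)) (x : Euc n) : ℝ := Metric.infDist x (frontier Ω)

/-- `σ`: the `d`-dimensional Hausdorff measure on `ℝⁿ`. -/
def hm (n : ℕ) (d : ℝ) : Measure (Euc n) := μH[d]

/-- `Γ ⊆ ℝⁿ` is `d`-Ahlfors regular with constant `A`:
`(1/A) rᵈ ≤ σ(B(ξ,r) ∩ Γ) ≤ A rᵈ` for all `ξ ∈ Γ` and `0 < r ≤ diam Γ`. -/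
def AhlforsRegular (d A : ℝ) (Γ : Set (Euc n)) : Prop :=
  Γ.Nonempty ∧ 0 < A ∧
    ∀ ξ ∈ Γ, ∀ r : ℝ, 0 < r → ENNReal.ofReal r ≤ EMetric.diam Γ →
      ENNReal.ofReal (r ^ d / A) ≤ hm n d (Metric.ball ξ r ∩ Γ) ∧
        hm n d (Metric.ball ξ r ∩ Γ) ≤ ENNReal.ofReal (A * r ^ d)

/-- A `λ`-carrot path from `x ∈ ∂Ω` to `y ∈ Ω`: a rectifiable curve, parameterized by
arc length (hence `1`-Lipschitz), from `x` to `y`, staying in `Ω ∪ {x}`, with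
`δ(ζ(t)) ≥ λ t`. -/
def IsCarrotPath (Ω : Set (Euc n)) (lam : ℝ) (x y : Euc n) : Prop :=
  ∃ (T : ℝ) (ζ : ℝ → Euc n), 0 ≤ T ∧ ζ 0 = x ∧ ζ T = y ∧
    LipschitzOnWith 1 ζ (Set.Icc 0 T) ∧
    (∀ t ∈ Set.Icc (0 : ℝ) T, ζ t ∈ Ω ∪ {x}) ∧
    (∀ t ∈ Set.Icc (0 : ℝ) T, lam * t ≤ bd Ω (ζ t))

/-- `y ∈ Ω` is a `(θ,λ,N)`-weak local John point. -/
def IsWLJPoint (Ω : Set (Euc n)) (d θ lam N : ℝ) (y : Euc n) : Prop :=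
  ∃ F : Set (Euc n), MeasurableSet F ∧
    F ⊆ Metric.ball y (N * bd Ω y) ∩ frontier Ω ∧
    ENNReal.ofReal θ * hm n d (Metric.ball y (N * bd Ω y) ∩ frontier Ω) ≤ hm n d F ∧
    ∀ x ∈ F, IsCarrotPath Ω lam x y

/-- The weak local John condition with specified parameters. -/
def WeakLocalJohnWith (Ω : Set (Euc n)) (d θ lam N : ℝ) : Prop :=
  0 < θ ∧ θ ≤ 1 ∧ 0 < lam ∧ lam ≤ 1 ∧ 2 ≤ N ∧ ∀ y ∈ Ω, IsWLJPoint Ω d θ lam N y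

/-- `Ω` is a weak local John domain. -/
def WeakLocalJohn (Ω : Set (Euc n)) (d : ℝ) : Prop :=
  ∃ θ lam N : ℝ, WeakLocalJohnWith Ω d θ lam N

/-- The interior corkscrew condition. -/
def InteriorCorkscrew (Ω : Set (Euc n)) : Prop :=
  ∃ ε : ℝ, 0 < ε ∧ ε < 1 ∧ ∀ x ∈ frontier Ω, ∀ r : ℝ, 0 < r →
    ENNReal.ofReal r < EMetric.diam Ω →
    ∃ z : Euc n, z ∈ Metric.ball x r ∧ Metric.ball z (ε * r) ⊆ Ω

/-- The Harnack chain condition. -/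
def HarnackChainCond (Ω : Set (Euc n)) : Prop :=
  ∃ (M m : ℝ) (Nf : ℝ → ℕ), 1 ≤ M ∧ 0 < m ∧ m < 1 ∧
    ∀ x ∈ Ω, ∀ y ∈ Ω,
      ∃ (N : ℕ) (c : Fin (N + 1) → Euc n) (r : Fin (N + 1) → ℝ),
        N ≤ Nf (dist x y / min (bd Ω x) (bd Ω y)) ∧
        x ∈ Metric.ball (c 0) (r 0) ∧ y ∈ Metric.ball (c (Fin.last N)) (r (Fin.last N)) ∧
        (∀ i : Fin N,
          (Metric.ball (c i.castSucc) (r i.castSucc) ∩ Metric.ball (c i.succ) (r i.succ)).Nonempty) ∧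
        ∀ i : Fin (N + 1), 0 < r i ∧ Metric.ball (c i) (r i) ⊆ Ω ∧
          m * (2 * r i) ≤ bd Ω (c i) - r i ∧ bd Ω (c i) - r i ≤ M * (2 * r i)

/-- The weighted ellipticity conditions
`λ δ(x)^{d+1-n} |ξ|² ≤ ξ·A(x)ξ` and `|η·A(x)ξ| ≤ Λ δ(x)^{d+1-n} |ξ||η|` on `Ω`. -/
def WeaklyElliptic (Ω : Set (Euc n)) (d lam Lam : ℝ)
    (A : Euc n → Euc n →L[ℝ] Euc n) : Prop :=
  0 < lam ∧ lam ≤ Lam ∧ (∀ v : Euc n, Measurable fun x => A x v) ∧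
    ∀ x ∈ Ω, ∀ ξ η : Euc n,
      lam * bd Ω x ^ (d + 1 - (n : ℝ)) * ‖ξ‖ ^ 2 ≤ ⟪ξ, A x ξ⟫ ∧
      |⟪η, A x ξ⟫| ≤ Lam * bd Ω x ^ (d + 1 - (n : ℝ)) * ‖ξ‖ * ‖η‖

/-- A test function on the open set `Ψ`: smooth, compactly supported, support inside `Ψ`. -/
def IsTestOn (Ψ : Set (Euc n)) (φ : Euc n → ℝ) : Prop :=
  ContDiff ℝ (⊤ : ℕ∞) φ ∧ HasCompactSupport φ ∧ tsupport φ ⊆ Ψ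

/-- `g` is the weak gradient of `u` on `Ψ`:
`∫_Ψ u ∂ᵥφ = −∫_Ψ ⟪g,v⟫ φ` for all test functions `φ` and directions `v`. -/
def HasWeakGradOn (u : Euc n → ℝ) (g : Euc n → Euc n) (Ψ : Set (Euc n)) : Prop :=
  LocallyIntegrableOn u Ψ volume ∧ LocallyIntegrableOn g Ψ volume ∧
    ∀ φ : Euc n → ℝ, IsTestOn Ψ φ → ∀ v : Euc n,
      (∫ x in Ψ, u x * fderiv ℝ φ x v) = -∫ x in Ψ, ⟪g x, v⟫ * φ x

/-- Weak formulation of `− div A ∇u = − div H` in `Ψ`, where `g` is the weak gradient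
of `u`. -/
def WeakSolOn (Ψ : Set (Euc n)) (A : Euc n → Euc n →L[ℝ] Euc n)
    (u : Euc n → ℝ) (g H : Euc n → Euc n) : Prop :=
  HasWeakGradOn u g Ψ ∧ LocallyIntegrableOn H Ψ volume ∧
    ∀ φ : Euc n → ℝ, IsTestOn Ψ φ →
      (∫ x in Ψ, ⟪gradient φ x, A x (g x)⟫) = ∫ x in Ψ, ⟪gradient φ x, H x⟫

/-- `Tr u(ξ) = 0` in the averaged sense: `r^{-n} ∫_{B(ξ,r)∩Ω} |u| → 0` as `r → 0⁺`. -/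
def TrZeroAt (Ω : Set (Euc n)) (u : Euc n → ℝ) (ξ : Euc n) : Prop :=
  Tendsto (fun r : ℝ => (1 / r ^ n) * ∫ x in Metric.ball ξ r ∩ Ω, |u x|)
    (𝓝[>] 0) (𝓝 0)

/-- The Whitney average `W_{c,β} f (y) = (⨍_{B(y, c δ(y))} |f|^β)^{1/β}`
(essential supremum if `β = ∞`), as an extended nonnegative real. -/
def wAvg (Ω : Set (Euc n)) (c : ℝ) (β : ℝ≥0∞) {F : Type*} [NormedAddCommGroup F]
    (f : Euc n → F) (y : Euc n) : ℝ≥0∞ :=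
  eLpNorm f β
    ((volume (Metric.ball y (c * bd Ω y)))⁻¹ • volume.restrict (Metric.ball y (c * bd Ω y)))

/-- The weighted averaged norm `‖f‖_{L^p_{av,c,β,s}(Ψ;Ω)}`:
`(∫_Ψ (W_{c,β}f)^p δ^{d-n+p-ps})^{1/p}`, `sup_Ψ (W_{c,β}f) δ^{1-s}` if `p = ∞`. -/
def avNormOn (Ω Ψ : Set (Euc n)) (d c : ℝ) (β p : ℝ≥0∞) (s : ℝ)
    {F : Type*} [NormedAddCommGroup F] (f : Euc n → F) : ℝ≥0∞ :=
  if p = ⊤ then ⨆ y ∈ Ψ, wAvg Ω c β f y * ENNReal.ofReal (bd Ω y) ^ (1 - s)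
  else (∫⁻ y in Ψ, wAvg Ω c β f y ^ p.toReal *
      ENNReal.ofReal (bd Ω y) ^ (d - n + p.toReal - p.toReal * s)) ^ (1 / p.toReal)

/-- The weighted averaged norm `‖f‖_{L^p_{av,c,β,s}(Ω)}`. -/
def avNorm (Ω : Set (Euc n)) (d c : ℝ) (β p : ℝ≥0∞) (s : ℝ)
    {F : Type*} [NormedAddCommGroup F] (f : Euc n → F) : ℝ≥0∞ :=
  avNormOn Ω Ω d c β p s f

/-- `f ∈ L^β_loc(Ω)`. -/
def MemLLoc (Ω : Set (Euc n)) (β : ℝ≥0∞) {F : Type*} [NormedAddCommGroup F]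
    (f : Euc n → F) : Prop :=
  AEStronglyMeasurable f (volume.restrict Ω) ∧
    ∀ K : Set (Euc n), K ⊆ Ω → IsCompact K → eLpNorm f β (volume.restrict K) < ⊤

/-- The nontangential cone `γ_a(ξ) = {x ∈ Ω : |x − ξ| < (1+a) δ(x)}`. -/
def ntCone (Ω : Set (Euc n)) (a : ℝ) (ξ : Euc n) : Set (Euc n) :=
  {x | x ∈ Ω ∧ dist x ξ < (1 + a) * bd Ω x}

/-- The nontangential maximal function `N_a f (ξ) = esssup_{γ_a(ξ)} |f|`. -/
def ntMax (Ω : Set (Euc n)) (a : ℝ) {F : Type*} [NormedAddCommGroup F]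
    (f : Euc n → F) (ξ : Euc n) : ℝ≥0∞ :=
  essSup (fun x => (‖f x‖₊ : ℝ≥0∞)) (volume.restrict (ntCone Ω a ξ))

/-- The `L^q` norm of an `ℝ≥0∞`-valued function. -/
def lqNormE (q : ℝ≥0∞) {α : Type*} [MeasurableSpace α] (μ : Measure α)
    (f : α → ℝ≥0∞) : ℝ≥0∞ :=
  if q = ⊤ then essSup f μ else (∫⁻ x, f x ^ q.toReal ∂μ) ^ (1 / q.toReal)

/-- `Tr_{a,c} u (x) = U`: `x` is in the closure of its nontangential cone, and the
Whitney averages of `|u − U|` tend to `0` nontangentially. -/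
def HasNTTrace (Ω : Set (Euc n)) (a c : ℝ) (u : Euc n → ℝ) (x : Euc n) (U : ℝ) : Prop :=
  x ∈ closure (ntCone Ω a x) ∧
    Tendsto (fun y => wAvg Ω c 1 (fun z => u z - U) y) (𝓝[ntCone Ω a x] x) (𝓝 0)


lemma vol_ball_eq (x : Euc n) {r : ℝ} (hr : 0 < r) :
    volume (Metric.ball x r) =
      ENNReal.ofReal (r ^ n * (volume (Metric.ball (0 : Euc n) 1)).toReal) := by
  rw [Measure.addHaar_ball_of_pos volume x hr, finrank_euclideanSpace_fin,
    ENNReal.ofReal_mul (by positivity), ENNReal.ofReal_toReal measure_ball_lt_top.ne]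

lemma bd_lip (Ω : Set (Euc n)) (x y : Euc n) : bd Ω x ≤ bd Ω y + dist x y :=
  Metric.infDist_le_infDist_add_dist

lemma ball_bd_subset {Ω : Set (Euc n)} (hΩ : Ω ≠ univ) {x : Euc n} (hx : x ∈ Ω) :
    Metric.ball x (bd Ω x) ⊆ Ω := by
  obtain ⟨y, hy, hxy⟩ := exists_mem_frontier_infDist_compl_eq_dist hx hΩ
  have h1 : bd Ω x ≤ Metric.infDist x Ωᶜ := hxy ▸ Metric.infDist_le_dist_of_mem hy
  exact (Metric.ball_subset_ball h1).trans Metric.ball_infDist_compl_subset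

lemma frontier_nonempty {Ω : Set (Euc n)} (hne : Ω.Nonempty) (hΩ : Ω ≠ univ) :
    (frontier Ω).Nonempty := by
  obtain ⟨x, hx⟩ := hne
  obtain ⟨y, hy, -⟩ := exists_mem_frontier_infDist_compl_eq_dist hx hΩ
  exact ⟨y, hy⟩

lemma bd_pos {Ω : Set (Euc n)} (ho : IsOpen Ω) (hne : Ω.Nonempty) (hΩ : Ω ≠ univ)
    {x : Euc n} (hx : x ∈ Ω) : 0 < bd Ω x := by
  rw [bd, ← (isClosed_frontier).notMem_iff_infDist_pos (frontier_nonempty hne hΩ)]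
  intro h
  rw [ho.frontier_eq] at h
  exact h.2 hx

lemma rpow_mem_bound {lo hi b : ℝ} (hlo : 0 < lo) (h1 : lo ≤ b) (h2 : b ≤ hi) (t : ℝ) :
    min (lo ^ t) (hi ^ t) ≤ b ^ t ∧ b ^ t ≤ max (lo ^ t) (hi ^ t) := by
  have hb : 0 < b := lt_of_lt_of_le hlo h1
  rcases le_or_gt 0 t with ht | ht
  · exact ⟨(min_le_left _ _).trans (Real.rpow_le_rpow hlo.le h1 ht),
      (Real.rpow_le_rpow hb.le h2 ht).trans (le_max_right _ _)⟩
  · exact ⟨(min_le_right _ _).trans (Real.rpow_le_rpow_of_nonpos hb h2 ht.le),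
      (Real.rpow_le_rpow_of_nonpos hlo h1 ht.le).trans (le_max_left _ _)⟩

lemma main_alg {δ c' b V K : ℝ} (hδ : 0 < δ) (hc' : 0 < c') (hb : 0 < b) (hV : 0 < V)
    (θ : ℝ) (n : ℕ) :
    δ ^ (θ - (n : ℝ)) * K / (c' ^ n * V) * ((c' / b * δ) ^ n * V) = K / b ^ n * δ ^ θ := by
  have h1 : δ ^ (θ - (n : ℝ)) * δ ^ (n : ℕ) = δ ^ θ := by
    rw [← Real.rpow_natCast δ n, ← Real.rpow_add hδ, sub_add_cancel]
  rw [← h1, mul_pow, div_pow]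
  have hc'n : (c' : ℝ) ^ n ≠ 0 := by positivity
  have hbn : (b : ℝ) ^ n ≠ 0 := by positivity
  field_simp


set_option maxHeartbeats 2000000 in
/-- averaged spaces coincide with unaveraged spaces when `β = p`.
`∫_Ω (⨍_{B(x,cδ(x))} |F|^p) δ(x)^θ dx ≈ ∫_Ω |F|^p δ^θ`, with constants depending
only on `p`, `θ`, `n`, `c`. -/
theorem statement_9 (n : ℕ) (p θ c : ℝ) (hp : 0 < p) (hc : 0 < c) (hc1 : c < 1) :
    ∃ c₁ c₂ : ℝ, 0 < c₁ ∧ 0 < c₂ ∧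
      ∀ Ω : Set (Euc n), IsOpen Ω → Ω.Nonempty → Ω ≠ Set.univ →
        ∀ F : Euc n → ℝ, MemLLoc Ω (ENNReal.ofReal p) F →
          ENNReal.ofReal c₁ *
              (∫⁻ x in Ω, ENNReal.ofReal |F x| ^ p * ENNReal.ofReal (bd Ω x) ^ θ) ≤
              (∫⁻ x in Ω,
                ((volume (Metric.ball x (c * bd Ω x)))⁻¹ *
                    ∫⁻ z in Metric.ball x (c * bd Ω x), ENNReal.ofReal |F z| ^ p) *
                  ENNReal.ofReal (bd Ω x) ^ θ) ∧
            (∫⁻ x in Ω,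
                ((volume (Metric.ball x (c * bd Ω x)))⁻¹ *
                    ∫⁻ z in Metric.ball x (c * bd Ω x), ENNReal.ofReal |F z| ^ p) *
                  ENNReal.ofReal (bd Ω x) ^ θ) ≤
              ENNReal.ofReal c₂ *
                (∫⁻ x in Ω, ENNReal.ofReal |F x| ^ p * ENNReal.ofReal (bd Ω x) ^ θ) := by
  have hc1' : (0 : ℝ) < 1 - c := by linarith
  have hc2' : (0 : ℝ) < 1 + c := by linarith
  set V : ℝ := (volume (Metric.ball (0 : Euc n) 1)).toReal with hVdef
  have hV : 0 < V :=
    ENNReal.toReal_pos (measure_ball_pos volume 0 one_pos).ne' measure_ball_lt_top.ne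
  set m : ℝ := min ((2 : ℝ) ^ (θ - (n : ℝ))) ((2 : ℝ) ^ (-(θ - (n : ℝ)))) with hmdef
  set M : ℝ := max ((1 / (1 + c)) ^ (θ - (n : ℝ))) ((1 / (1 - c)) ^ (θ - (n : ℝ))) with hMdef
  have hmpos : 0 < m :=
    lt_min (Real.rpow_pos_of_pos two_pos _) (Real.rpow_pos_of_pos two_pos _)
  have hMpos : 0 < M :=
    lt_of_lt_of_le (Real.rpow_pos_of_pos (by positivity) _) (le_max_left _ _)
  refine ⟨m / (1 + c) ^ n, M / (1 - c) ^ n, by positivity, by positivity, ?_⟩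
  intro Ω ho hne huniv F hF
  -- basic facts about Ω
  have hbd : ∀ x ∈ Ω, 0 < bd Ω x := fun x hx => bd_pos ho hne huniv hx
  have hball : ∀ x ∈ Ω, Metric.ball x (c * bd Ω x) ⊆ Ω := fun x hx =>
    (Metric.ball_subset_ball (by nlinarith [hbd x hx])).trans (ball_bd_subset huniv hx)
  have hbdc : Continuous (bd Ω) := Metric.continuous_infDist_pt _
  -- measurable version of |F|^p
  have hFm := hF.1
  set G : Euc n → ℝ≥0∞ := fun z => ENNReal.ofReal |F z| ^ p with hGdef
  set G' : Euc n → ℝ≥0∞ := fun z => ENNReal.ofReal |hFm.mk F z| ^ p with hG'def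
  have hG'm : Measurable G' :=
    (ENNReal.measurable_ofReal.comp hFm.stronglyMeasurable_mk.measurable.abs).pow_const p
  have hGG' : G =ᵐ[volume.restrict Ω] G' := hFm.ae_eq_mk.mono fun z hz => by
    simp only [hGdef, hG'def, hz]
  -- the weight
  set w : Euc n → ℝ≥0∞ := fun x =>
    (volume (Metric.ball x (c * bd Ω x)))⁻¹ * ENNReal.ofReal (bd Ω x) ^ θ with hwdef
  have hwm : Measurable w := by
    apply Measurable.mul
    · apply Measurable.inv
      have h1 : (fun x => volume (Metric.ball x (c * bd Ω x))) =
          fun x => volume (Metric.ball (0 : Euc n) (c * bd Ω x)) := by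
        funext x; exact Measure.addHaar_ball_center volume x _
      rw [h1]
      have h2 : Monotone (fun r : ℝ => volume (Metric.ball (0 : Euc n) r)) :=
        fun a b h => measure_mono (Metric.ball_subset_ball h)
      exact h2.measurable.comp (continuous_const.mul hbdc).measurable
    · exact (ENNReal.measurable_ofReal.comp hbdc.measurable).pow_const θ
  have hwval : ∀ x : Euc n, 0 < bd Ω x →
      w x = ENNReal.ofReal ((bd Ω x) ^ (θ - (n : ℝ)) / (c ^ n * V)) := by
    intro x hx
    have hcb : 0 < c * bd Ω x := by positivity
    have halg : ((c * bd Ω x) ^ n * V)⁻¹ * (bd Ω x) ^ θ =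
        (bd Ω x) ^ (θ - (n : ℝ)) / (c ^ n * V) := by
      have h1 : (bd Ω x) ^ (θ - (n : ℝ)) * (bd Ω x) ^ (n : ℕ) = (bd Ω x) ^ θ := by
        rw [← Real.rpow_natCast (bd Ω x) n, ← Real.rpow_add hx, sub_add_cancel]
      rw [← h1, mul_pow]
      have hb : (0:ℝ) < bd Ω x ^ (n:ℕ) := by positivity
      field_simp
    simp only [hwdef]
    rw [vol_ball_eq x hcb, ← ENNReal.ofReal_inv_of_pos (by positivity),
      ENNReal.ofReal_rpow_of_pos hx, ← ENNReal.ofReal_mul (by positivity), halg]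
  -- the kernel
  set U : Set (Euc n × Euc n) := {q : Euc n × Euc n | dist q.2 q.1 < c * bd Ω q.1} with hUdef
  have hUopen : IsOpen U :=
    isOpen_lt (continuous_snd.dist continuous_fst) (continuous_const.mul (hbdc.comp continuous_fst))
  set H : Euc n × Euc n → ℝ≥0∞ := U.indicator (fun q => w q.1 * G' q.2) with hHdef
  have hHm : Measurable H :=
    ((hwm.comp measurable_fst).mul (hG'm.comp measurable_snd)).indicator hUopen.measurableSet
  have hopenS : ∀ z : Euc n, IsOpen {x : Euc n | dist z x < c * bd Ω x} := fun z =>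
    isOpen_lt (continuous_const.dist continuous_id) (continuous_const.mul hbdc)
  set k : Euc n → ℝ≥0∞ :=
    fun z => ∫⁻ x in Ω, ({x : Euc n | dist z x < c * bd Ω x}).indicator w x with hkdef
  -- Step 1 : rewriting the middle integrand
  have step1 : ∀ x ∈ Ω,
      ((volume (Metric.ball x (c * bd Ω x)))⁻¹ *
          ∫⁻ z in Metric.ball x (c * bd Ω x), G z) *
        ENNReal.ofReal (bd Ω x) ^ θ = ∫⁻ z, H (x, z) := by
    intro x hx
    have hsub : Metric.ball x (c * bd Ω x) ⊆ Ω := hball x hx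
    have h1 : ∀ z, H (x, z) =
        (Metric.ball x (c * bd Ω x)).indicator (fun z => w x * G' z) z := by
      intro z
      by_cases h : dist z x < c * bd Ω x <;>
        simp [hHdef, hUdef, Set.indicator_apply, Metric.mem_ball, h]
    have h2 : (∫⁻ z, H (x, z)) = w x * ∫⁻ z in Metric.ball x (c * bd Ω x), G' z := by
      simp only [h1]
      rw [lintegral_indicator measurableSet_ball, lintegral_const_mul _ hG'm]
    have h3 : (∫⁻ z in Metric.ball x (c * bd Ω x), G' z)
        = ∫⁻ z in Metric.ball x (c * bd Ω x), G z :=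
      lintegral_congr_ae (Filter.EventuallyEq.symm (ae_restrict_of_ae_restrict_of_subset hsub hGG'))
    rw [h2, h3, hwdef]
    ring
  -- Step 2 : Fubini-Tonelli
  have hswap : (∫⁻ x in Ω, ∫⁻ z, H (x, z)) = ∫⁻ z, ∫⁻ x in Ω, H (x, z) := by
    apply lintegral_lintegral_swap
    exact (hHm.comp (measurable_fst.prodMk measurable_snd)).aemeasurable
  -- Step 3 : inner integral
  have hinner : ∀ z : Euc n, (∫⁻ x in Ω, H (x, z)) = k z * G' z := by
    intro z
    have h1 : ∀ x, H (x, z) = ({x : Euc n | dist z x < c * bd Ω x}).indicator w x * G' z := by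
      intro x
      simp only [hHdef, hUdef, Set.indicator_apply, Set.mem_setOf_eq]
      by_cases h : dist z x < c * bd Ω x
      · simp [h]
      · simp [h]
    simp only [h1]
    rw [lintegral_mul_const _ (hwm.indicator (hopenS z).measurableSet)]
  -- the middle quantity
  have hI : (∫⁻ x in Ω,
      ((volume (Metric.ball x (c * bd Ω x)))⁻¹ *
          ∫⁻ z in Metric.ball x (c * bd Ω x), G z) *
        ENNReal.ofReal (bd Ω x) ^ θ) = ∫⁻ z, k z * G' z := by
    rw [setLIntegral_congr_fun ho.measurableSet step1, hswap]
    exact lintegral_congr hinner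
  -- Step 4a : vanishing outside Ω
  have hkzero : ∀ z, z ∉ Ω → k z = 0 := by
    intro z hz
    have h0 : ∀ x ∈ Ω, ({x : Euc n | dist z x < c * bd Ω x}).indicator w x = (0 : ℝ≥0∞) := by
      intro x hx
      apply Set.indicator_of_notMem
      intro h
      exact hz (ball_bd_subset huniv hx
        (Metric.mem_ball.2 (lt_of_lt_of_le h (by nlinarith [hbd x hx]))))
    simp only [hkdef]
    rw [setLIntegral_congr_fun ho.measurableSet h0, lintegral_zero]
  -- Step 4b : upper bound on k
  have hkupper : ∀ z ∈ Ω,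
      k z ≤ ENNReal.ofReal (M / (1 - c) ^ n) * ENNReal.ofReal (bd Ω z) ^ θ := by
    intro z hz
    have hδ : 0 < bd Ω z := hbd z hz
    set δ : ℝ := bd Ω z with hδdef
    set C₂ : ℝ≥0∞ := ENNReal.ofReal (δ ^ (θ - (n : ℝ)) * M / (c ^ n * V)) with hC₂def
    have hpt : ∀ x, ({x : Euc n | dist z x < c * bd Ω x}).indicator w x ≤
        (Metric.ball z (c / (1 - c) * δ)).indicator (fun _ => C₂) x := by
      intro x
      by_cases hxS : x ∈ {x : Euc n | dist z x < c * bd Ω x}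
      · rw [Set.indicator_of_mem hxS]
        have hxS' : dist z x < c * bd Ω x := hxS
        have hbx : 0 < bd Ω x := by nlinarith [dist_nonneg (x := z) (y := x), hxS']
        have hlip1 : bd Ω x ≤ δ + dist z x := by
          have := bd_lip Ω x z
          rw [dist_comm x z] at this
          linarith
        have hlip2 : δ ≤ bd Ω x + dist z x := bd_lip Ω z x
        have h1 : (1 - c) * bd Ω x ≤ δ := by nlinarith [hxS']
        have h2 : δ ≤ (1 + c) * bd Ω x := by nlinarith [hxS']
        have hxB : x ∈ Metric.ball z (c / (1 - c) * δ) := by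
          rw [Metric.mem_ball, dist_comm]
          calc dist z x < c * bd Ω x := hxS'
            _ ≤ c / (1 - c) * δ := by
              rw [div_mul_eq_mul_div, le_div_iff₀ hc1']
              nlinarith [mul_le_mul_of_nonneg_left h1 hc.le]
        rw [Set.indicator_of_mem hxB, hwval x hbx, hC₂def]
        apply ENNReal.ofReal_le_ofReal
        apply (div_le_div_iff_of_pos_right (by positivity : (0:ℝ) < c ^ n * V)).2
        -- (bd Ω x) ^ (θ - n) ≤ δ ^ (θ - n) * M
        have hlo : δ / (1 + c) ≤ bd Ω x := by rw [div_le_iff₀ hc2']; nlinarith [h2]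
        have hhi : bd Ω x ≤ δ / (1 - c) := by rw [le_div_iff₀ hc1']; nlinarith [h1]
        have hkey := (rpow_mem_bound (by positivity) hlo hhi (θ - (n : ℝ))).2
        have e1 : (δ / (1 + c)) ^ (θ - (n : ℝ)) = δ ^ (θ - (n : ℝ)) * (1 / (1 + c)) ^ (θ - (n : ℝ)) := by
          rw [← Real.mul_rpow hδ.le (by positivity), mul_one_div]
        have e2 : (δ / (1 - c)) ^ (θ - (n : ℝ)) = δ ^ (θ - (n : ℝ)) * (1 / (1 - c)) ^ (θ - (n : ℝ)) := by
          rw [← Real.mul_rpow hδ.le (by positivity), mul_one_div]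
        calc (bd Ω x) ^ (θ - (n : ℝ))
            ≤ max ((δ / (1 + c)) ^ (θ - (n : ℝ))) ((δ / (1 - c)) ^ (θ - (n : ℝ))) := hkey
          _ ≤ δ ^ (θ - (n : ℝ)) * M := by
              rw [e1, e2, hMdef]
              apply max_le
              · exact mul_le_mul_of_nonneg_left (le_max_left _ _) (by positivity)
              · exact mul_le_mul_of_nonneg_left (le_max_right _ _) (by positivity)
      · rw [Set.indicator_of_notMem hxS]
        exact zero_le
    calc k z ≤ ∫⁻ x in Ω, (Metric.ball z (c / (1 - c) * δ)).indicator (fun _ => C₂) x :=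
          lintegral_mono hpt
      _ = C₂ * (volume.restrict Ω) (Metric.ball z (c / (1 - c) * δ)) := by
          rw [lintegral_indicator measurableSet_ball, setLIntegral_const]
      _ ≤ C₂ * volume (Metric.ball z (c / (1 - c) * δ)) :=
          mul_le_mul_right (Measure.restrict_apply_le _ _) _
      _ = ENNReal.ofReal (M / (1 - c) ^ n) * ENNReal.ofReal δ ^ θ := by
          rw [vol_ball_eq _ (mul_pos (div_pos hc hc1') hδ), hC₂def,
            ← ENNReal.ofReal_mul (by positivity),
            main_alg hδ hc hc1' hV θ n,
            ENNReal.ofReal_mul (by positivity),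
            ENNReal.ofReal_rpow_of_pos hδ]
  -- Step 4c : lower bound on k
  have hklower : ∀ z ∈ Ω,
      ENNReal.ofReal (m / (1 + c) ^ n) * ENNReal.ofReal (bd Ω z) ^ θ ≤ k z := by
    intro z hz
    have hδ : 0 < bd Ω z := hbd z hz
    set δ : ℝ := bd Ω z with hδdef
    set C₁ : ℝ≥0∞ := ENNReal.ofReal (δ ^ (θ - (n : ℝ)) * m / (c ^ n * V)) with hC₁def
    have hBΩ : Metric.ball z (c / (1 + c) * δ) ⊆ Ω := by
      refine (Metric.ball_subset_ball ?_).trans (ball_bd_subset huniv hz)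
      rw [div_mul_eq_mul_div, div_le_iff₀ hc2']
      nlinarith
    have hpt : ∀ x, (Metric.ball z (c / (1 + c) * δ)).indicator (fun _ => C₁) x ≤
        ({x : Euc n | dist z x < c * bd Ω x}).indicator w x := by
      intro x
      by_cases hxB : x ∈ Metric.ball z (c / (1 + c) * δ)
      · rw [Set.indicator_of_mem hxB]
        have hd : dist z x < c / (1 + c) * δ := by
          rw [← dist_comm x z]; exact Metric.mem_ball.1 hxB
        have hd0 : (0:ℝ) ≤ dist z x := dist_nonneg
        have hlip1 : bd Ω x ≤ δ + dist z x := by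
          have := bd_lip Ω x z
          rw [dist_comm x z] at this
          linarith
        have hlip2 : δ ≤ bd Ω x + dist z x := bd_lip Ω z x
        have hd' : dist z x * (1 + c) < c * δ := by
          have h := mul_lt_mul_of_pos_right hd hc2'
          calc dist z x * (1 + c) < c / (1 + c) * δ * (1 + c) := h
            _ = c * δ := by field_simp
        have hlo : δ / (1 + c) ≤ bd Ω x := by
          rw [div_le_iff₀ hc2']
          nlinarith [mul_le_mul_of_nonneg_right hlip2 hc2'.le]
        have hlo' : δ ≤ bd Ω x * (1 + c) := (div_le_iff₀ hc2').1 hlo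
        have hbx : 0 < bd Ω x := lt_of_lt_of_le (div_pos hδ hc2') hlo
        have hxS : dist z x < c * bd Ω x := by
          nlinarith [hd', mul_le_mul_of_nonneg_left hlo' hc.le, hc2']
        rw [Set.indicator_of_mem (show x ∈ {x : Euc n | dist z x < c * bd Ω x} from hxS)]
        rw [hwval x hbx, hC₁def]
        apply ENNReal.ofReal_le_ofReal
        apply (div_le_div_iff_of_pos_right (by positivity : (0:ℝ) < c ^ n * V)).2
        -- δ ^ (θ-n) * m ≤ (bd Ω x) ^ (θ-n)
        have hlo2 : δ / 2 ≤ bd Ω x := by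
          refine le_trans ?_ hlo
          rw [div_le_div_iff₀ two_pos hc2']
          nlinarith [mul_le_mul_of_nonneg_left hc1.le hδ.le]
        have hcd : c / (1 + c) * δ ≤ δ := by
          rw [div_mul_eq_mul_div, div_le_iff₀ hc2']
          nlinarith [mul_le_mul_of_nonneg_left hc1.le hδ.le]
        have hhi2 : bd Ω x ≤ 2 * δ := by nlinarith [hlip1, hd, hcd]
        have hkey := (rpow_mem_bound (by positivity) hlo2 hhi2 (θ - (n : ℝ))).1
        have e1 : (δ / 2) ^ (θ - (n : ℝ)) = δ ^ (θ - (n : ℝ)) * ((2:ℝ) ^ (θ - (n : ℝ)))⁻¹ := by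
          rw [div_eq_mul_inv, Real.mul_rpow hδ.le (by positivity), Real.inv_rpow (by norm_num)]
        have e2 : (2 * δ) ^ (θ - (n : ℝ)) = δ ^ (θ - (n : ℝ)) * (2:ℝ) ^ (θ - (n : ℝ)) := by
          rw [mul_comm (2:ℝ) δ, Real.mul_rpow hδ.le (by norm_num)]
        refine le_trans (le_min ?_ ?_) hkey
        · rw [e1, hmdef]
          apply mul_le_mul_of_nonneg_left ?_ (by positivity)
          rw [← Real.rpow_neg (by norm_num : (0:ℝ) ≤ 2)]
          exact min_le_right _ _
        · rw [e2, hmdef]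
          exact mul_le_mul_of_nonneg_left (min_le_left _ _) (by positivity)
      · rw [Set.indicator_of_notMem hxB]
        exact zero_le
    calc ENNReal.ofReal (m / (1 + c) ^ n) * ENNReal.ofReal δ ^ θ
        = C₁ * volume (Metric.ball z (c / (1 + c) * δ)) := by
          rw [vol_ball_eq _ (mul_pos (div_pos hc hc2') hδ), hC₁def,
            ← ENNReal.ofReal_mul (by positivity),
            main_alg hδ hc hc2' hV θ n,
            ENNReal.ofReal_mul (by positivity),
            ENNReal.ofReal_rpow_of_pos hδ]
      _ = C₁ * (volume.restrict Ω) (Metric.ball z (c / (1 + c) * δ)) := by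
          rw [Measure.restrict_apply measurableSet_ball,
            Set.inter_eq_self_of_subset_left hBΩ]
      _ = ∫⁻ x in Ω, (Metric.ball z (c / (1 + c) * δ)).indicator (fun _ => C₁) x := by
          rw [lintegral_indicator measurableSet_ball, setLIntegral_const]
      _ ≤ k z := lintegral_mono hpt
  -- Step 5 : conclusion
  have hmeasδ : Measurable (fun z => G' z * ENNReal.ofReal (bd Ω z) ^ θ) :=
    hG'm.mul ((ENNReal.measurable_ofReal.comp hbdc.measurable).pow_const θ)
  have e1 : (∫⁻ x in Ω, G x * ENNReal.ofReal (bd Ω x) ^ θ)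
      = ∫⁻ x in Ω, G' x * ENNReal.ofReal (bd Ω x) ^ θ :=
    lintegral_congr_ae (hGG'.mono fun z hz => by simp only [hz])
  constructor
  · -- lower bound
    calc ENNReal.ofReal (m / (1 + c) ^ n) * ∫⁻ x in Ω, G x * ENNReal.ofReal (bd Ω x) ^ θ
        = ∫⁻ x in Ω, ENNReal.ofReal (m / (1 + c) ^ n) *
            (G' x * ENNReal.ofReal (bd Ω x) ^ θ) := by
          rw [e1, lintegral_const_mul _ hmeasδ]
      _ ≤ ∫⁻ z in Ω, k z * G' z := by
          apply lintegral_mono_ae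
          rw [ae_restrict_iff' ho.measurableSet]
          refine ae_of_all _ fun z hz => ?_
          calc ENNReal.ofReal (m / (1 + c) ^ n) * (G' z * ENNReal.ofReal (bd Ω z) ^ θ)
              = (ENNReal.ofReal (m / (1 + c) ^ n) * ENNReal.ofReal (bd Ω z) ^ θ) * G' z := by
                ring
            _ ≤ k z * G' z := mul_le_mul_left (hklower z hz) _
      _ ≤ ∫⁻ z, k z * G' z := setLIntegral_le_lintegral _ _
      _ = _ := hI.symm
  · -- upper bound
    calc (∫⁻ x in Ω,
          ((volume (Metric.ball x (c * bd Ω x)))⁻¹ *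
              ∫⁻ z in Metric.ball x (c * bd Ω x), G z) *
            ENNReal.ofReal (bd Ω x) ^ θ)
        = ∫⁻ z, k z * G' z := hI
      _ ≤ ∫⁻ z, Ω.indicator (fun z => ENNReal.ofReal (M / (1 - c) ^ n) *
            (G' z * ENNReal.ofReal (bd Ω z) ^ θ)) z := by
          apply lintegral_mono
          intro z
          by_cases hz : z ∈ Ω
          · rw [Set.indicator_of_mem hz]
            calc k z * G' z
                ≤ (ENNReal.ofReal (M / (1 - c) ^ n) * ENNReal.ofReal (bd Ω z) ^ θ) * G' z :=
                  mul_le_mul_left (hkupper z hz) _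
              _ = ENNReal.ofReal (M / (1 - c) ^ n) *
                  (G' z * ENNReal.ofReal (bd Ω z) ^ θ) := by ring
          · simp only [Set.indicator_of_notMem hz, hkzero z hz, zero_mul, le_refl]
      _ = ∫⁻ z in Ω, ENNReal.ofReal (M / (1 - c) ^ n) *
            (G' z * ENNReal.ofReal (bd Ω z) ^ θ) := lintegral_indicator ho.measurableSet _
      _ = ENNReal.ofReal (M / (1 - c) ^ n) *
            ∫⁻ x in Ω, G x * ENNReal.ofReal (bd Ω x) ^ θ := by
          rw [lintegral_const_mul _ hmeasδ, e1]


end Paper
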